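/- Let (X,d) be a metric space, M a nonempty proper closed subset of X, and F : X∖M → (0,∞) any positive function. Then the generalized Ibragimov metric v(x,y) = 2·log((d(x,y) + max{F(x), F(y)}) / √(F(x)·F(y))) on X∖M is Gromov hyperbolic with Gromov constant δ ≤ log 4: for all x,y,z,w ∈ X∖M, v(x,z) + v(y,w) ≤ max{ v(x,w) + v(y,z), v(x,y) + v(z,w) } + 2·log 4. -/

import Mathlib

/-!
With `A(x,y) = d(x,y) + max{F(x), F(y)}` one has `v(x,y) = 2 log A(x,y) - log F(x) - log F(y)`.
In the four-point condition each point occurs once in every pair of terms, so the `log F` terms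
cancel and the condition becomes `A(x,z) A(y,w) ≤ 4 max{A(x,w) A(y,z), A(x,y) A(z,w)}`.
Since `A` satisfies the triangle inequality, this is an instance of a four-point inequality valid
for any semimetric: if `a` is the largest of the sides `a, b, c, d` of a quadrilateral
with diagonals `p, q`, then `p q ≤ (c + d)(b + c) = b d + c (b + c + d) ≤ b d + 3 a c`.
-/

open Real

/-- Generalized Ibragimov function. -/
noncomputable def vIb {X : Type*} [MetricSpace X] (F : X → ℝ) (x y : X) : ℝ :=
  2 * Real.log ((dist x y + max (F x) (F y)) / Real.sqrt (F x * F y))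

lemma mul_le_mul_add_three_mul {p q x y z s : ℝ} (hq : 0 ≤ q) (hy : 0 ≤ y) (hz : 0 ≤ z)
    (hxs : x ≤ s) (hys : y ≤ s) (hzs : z ≤ s) (hp : p ≤ y + z) (hq' : q ≤ x + z) :
    p * q ≤ x * y + 3 * (s * z) :=
  calc p * q ≤ (y + z) * (x + z) := mul_le_mul hp hq' hq (by positivity)
    _ = x * y + z * (x + y + z) := by ring
    _ ≤ x * y + 3 * (s * z) := by nlinarith

lemma mul_le_four_mul_max_of_le_add {a b c d p q : ℝ} (ha : 0 ≤ a) (hb : 0 ≤ b) (hc : 0 ≤ c)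
    (hd : 0 ≤ d) (hq : 0 ≤ q) (hpab : p ≤ a + b) (hpcd : p ≤ c + d) (hqad : q ≤ a + d)
    (hqbc : q ≤ b + c) : p * q ≤ 4 * max (a * c) (b * d) := by
  have hmax_ac := le_max_left (a * c) (b * d)
  have hmax_bd := le_max_right (a * c) (b * d)
  obtain ⟨hba, hca, hda⟩ | ⟨hab, hcb, hdb⟩ | ⟨hac, hbc, hdc⟩ | ⟨had, hbd, hcd⟩ :
      (b ≤ a ∧ c ≤ a ∧ d ≤ a) ∨ (a ≤ b ∧ c ≤ b ∧ d ≤ b) ∨ (a ≤ c ∧ b ≤ c ∧ d ≤ c) ∨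
        (a ≤ d ∧ b ≤ d ∧ c ≤ d) := by grind
  · linarith [mul_le_mul_add_three_mul (p := p) hq hd hc hba hda hca (by linarith) hqbc]
  · linarith [mul_le_mul_add_three_mul (p := p) hq hc hd hab hcb hdb hpcd (by linarith)]
  · linarith [mul_le_mul_add_three_mul (p := p) hq hb ha hdc hbc hac (by linarith)
      (by linarith)]
  · linarith [mul_le_mul_add_three_mul (p := p) hq ha hb hcd had hbd (by linarith)
      (by linarith)]

lemma mul_le_four_mul_max_of_triangle {X : Type*} {ρ : X → X → ℝ}
    (hρ₀ : ∀ u v, 0 ≤ ρ u v) (hρsymm : ∀ u v, ρ u v = ρ v u)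
    (hρtri : ∀ u v t, ρ u t ≤ ρ u v + ρ v t) (x y z w : X) :
    ρ x z * ρ y w ≤ 4 * max (ρ x w * ρ y z) (ρ x y * ρ z w) := by
  have hpcd : ρ x z ≤ ρ z w + ρ x w := by linarith [hρtri x w z, hρsymm w z]
  have hqad : ρ y w ≤ ρ x y + ρ x w := by linarith [hρtri y x w, hρsymm y x]
  rw [max_comm, mul_comm (ρ x w)]
  exact mul_le_four_mul_max_of_le_add (hρ₀ x y) (hρ₀ y z) (hρ₀ z w) (hρ₀ x w) (hρ₀ y w)
    (hρtri x y z) hpcd hqad (hρtri y z w)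

section distAddMax

variable {X : Type*} [MetricSpace X] (F : X → ℝ)

def distAddMax (x y : X) : ℝ :=
  dist x y + max (F x) (F y)

variable {F}

lemma distAddMax_comm (x y : X) : distAddMax F x y = distAddMax F y x := by
  rw [distAddMax, distAddMax, dist_comm, max_comm]

lemma distAddMax_pos {x y : X} (hx : 0 < F x) : 0 < distAddMax F x y :=
  add_pos_of_nonneg_of_pos dist_nonneg (lt_max_of_lt_left hx)

lemma distAddMax_le_add {u v t : X} (hv : 0 ≤ F v) :
    distAddMax F u t ≤ distAddMax F u v + distAddMax F v t := by
  have hmax : max (F u) (F t) ≤ max (F u) (F v) + max (F v) (F t) :=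
    max_le (le_add_of_le_of_nonneg (le_max_left _ _) (hv.trans (le_max_left _ _)))
      (le_add_of_nonneg_of_le (hv.trans (le_max_right _ _)) (le_max_right _ _))
  unfold distAddMax
  linarith [dist_triangle u v t]

lemma vIb_eq {x y : X} (hx : 0 < F x) (hy : 0 < F y) :
    vIb F x y = 2 * log (distAddMax F x y) - log (F x) - log (F y) := by
  rw [vIb, ← distAddMax, log_div (distAddMax_pos hx).ne' (by positivity),
    log_sqrt (by positivity), log_mul hx.ne' hy.ne']
  ring

end distAddMax

lemma log_add_log_le_of_mul_le {a b c d k : ℝ} (ha : 0 < a) (hb : 0 < b) (hc : 0 < c)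
    (hd : 0 < d) (hk : 0 < k) (h : a * b ≤ k * (c * d)) :
    log a + log b ≤ log k + (log c + log d) := by
  rw [← log_mul ha.ne' hb.ne', ← log_mul hc.ne' hd.ne', ← log_mul hk.ne' (by positivity)]
  exact log_le_log (by positivity) h

theorem stmt_15_general {X : Type*} [MetricSpace X] (M : Set X)
    (F : X → ℝ) (hFpos : ∀ x ∉ M, 0 < F x) :
    ∀ x ∉ M, ∀ y ∉ M, ∀ z ∉ M, ∀ w ∉ M,
      vIb F x z + vIb F y w ≤
        max (vIb F x w + vIb F y z) (vIb F x y + vIb F z w) + 2 * Real.log 4 := by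
  intro x hx y hy z hz w hw
  have fx := hFpos x hx; have fy := hFpos y hy; have fz := hFpos z hz; have fw := hFpos w hw
  have hfour := mul_le_four_mul_max_of_triangle
    (ρ := fun u v : {u // u ∉ M} => distAddMax F u v)
    (fun u _ => (distAddMax_pos (hFpos u u.2)).le) (fun _ _ => distAddMax_comm _ _)
    (fun _ v _ => distAddMax_le_add (hFpos v v.2).le) ⟨x, hx⟩ ⟨y, hy⟩ ⟨z, hz⟩ ⟨w, hw⟩
  rw [mul_max_of_nonneg _ _ (by norm_num)] at hfour
  rw [vIb_eq fx fz, vIb_eq fy fw, vIb_eq fx fw, vIb_eq fy fz, vIb_eq fx fy, vIb_eq fz fw,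
    ← max_add_add_right, le_max_iff]
  rcases le_max_iff.1 hfour with h | h
  · left
    linarith [log_add_log_le_of_mul_le (distAddMax_pos fx) (distAddMax_pos fy)
      (distAddMax_pos fx) (distAddMax_pos fy) four_pos h]
  · right
    linarith [log_add_log_le_of_mul_le (distAddMax_pos fx) (distAddMax_pos fy)
      (distAddMax_pos fx) (distAddMax_pos fz) four_pos h]

theorem stmt_15 {X : Type*} [MetricSpace X] (M : Set X)
    (hMclosed : IsClosed M) (hMne : M.Nonempty) (hMproper : M ≠ Set.univ)
    (F : X → ℝ) (hFpos : ∀ x ∉ M, 0 < F x) :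
    ∀ x ∉ M, ∀ y ∉ M, ∀ z ∉ M, ∀ w ∉ M,
      vIb F x z + vIb F y w ≤
        max (vIb F x w + vIb F y z) (vIb F x y + vIb F z w) + 2 * Real.log 4 :=
  stmt_15_general M F hFpos
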